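/- Let β ≥ 1, α < β + 1 and λ ≠ 0. For x > 0, the function H(x) = x^{β−α+1}/(β−α+1) · ∑_{n=0}^∞ [ (c)_n / ((c+1)_n (3/2)_n) ] (λ²x^{2β}/4)ⁿ/n!, where c = −α/(2β) + 1/(2β) + 1/2, satisfies H'(x) = sinh(λx^β)/(λx^α). -/

import Mathlib

/-!
Put `p = β - α + 1 = 2βc > 0`. Since `(c)ₙ / (c+1)ₙ = c / (c+n)` and `(3/2)ₙ n! 4ⁿ = (2n+1)!`,
the `n`-th term of `H` is `λ²ⁿ x^(p+2βn) / ((2n+1)! (p+2βn))`. Differentiating termwise, which is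
legitimate because the coefficients `λ²ⁿ/(2n+1)!` are those of an entire series, gives
`∑ λ²ⁿ x^(β-α+2βn) / (2n+1)!`, the sinh series of `λx^β` divided by `λx^α`.
-/

noncomputable def poch (a : ℝ) (n : ℕ) : ℝ := ∏ i ∈ Finset.range n, (a + (i : ℝ))

open Real Set

lemma poch_succ (a : ℝ) (n : ℕ) : poch a (n + 1) = poch a n * (a + n) :=
  Finset.prod_range_succ _ _

lemma poch_pos {a : ℝ} (ha : 0 < a) (n : ℕ) : 0 < poch a n := by
  induction n with
  | zero => simp [poch]
  | succ n ih => rw [poch_succ]; positivity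

lemma poch_add_one_mul (a : ℝ) (n : ℕ) : poch (a + 1) n * a = poch a n * (a + n) := by
  induction n with
  | zero => simp [poch]
  | succ n ih =>
    rw [poch_succ, poch_succ]
    push_cast
    linear_combination (a + 1 + n) * ih

lemma poch_div_poch_add_one {a : ℝ} (ha : 0 < a) (n : ℕ) :
    poch a n / poch (a + 1) n = a / (a + n) := by
  have := poch_pos (by linarith : 0 < a + 1) n
  rw [div_eq_div_iff (by positivity) (by positivity)]
  linear_combination -(poch_add_one_mul a n)

lemma poch_three_halves_mul_factorial_mul_four_pow (n : ℕ) :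
    poch (3 / 2) n * n.factorial * 4 ^ n = ((2 * n + 1).factorial : ℝ) := by
  induction n with
  | zero => simp [poch]
  | succ n ih =>
    rw [show 2 * (n + 1) + 1 = 2 * n + 1 + 1 + 1 by ring, Nat.factorial_succ, Nat.factorial_succ,
      poch_succ, Nat.factorial_succ, pow_succ]
    push_cast
    rw [← ih]
    ring

lemma rpow_add_mul_natCast {y : ℝ} (hy : 0 < y) (s t : ℝ) (n : ℕ) :
    y ^ (s + t * n) = y ^ s * (y ^ t) ^ n := by
  rw [← rpow_natCast, ← rpow_mul hy.le, rpow_add hy]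

lemma rpow_le_rpow_add_rpow {a b y : ℝ} (ha : 0 < a) (hy : y ∈ Icc a b) (s : ℝ) :
    y ^ s ≤ a ^ s + b ^ s := by
  have hb : 0 < b := ha.trans_le (hy.1.trans hy.2)
  rcases le_total 0 s with hs | hs
  · linarith [rpow_le_rpow (ha.le.trans hy.1) hy.2 hs, rpow_pos_of_pos ha s]
  · linarith [rpow_le_rpow_of_nonpos ha hy.1 hs, rpow_pos_of_pos hb s]

section TermwiseDerivative

variable {a : ℕ → ℝ} (ha : ∀ r, Summable fun n => a n * r ^ n)
include ha

lemma summable_abs_mul_rpow {x : ℝ} (hx : 0 < x) (s t : ℝ) :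
    Summable fun n : ℕ => |a n| * x ^ (s + t * n) := by
  have := ((summable_abs_iff.mpr (ha (x ^ t))).mul_left (x ^ s))
  refine this.congr fun n => ?_
  rw [rpow_add_mul_natCast hx, abs_mul, abs_pow, abs_of_pos (rpow_pos_of_pos hx t)]
  ring

theorem hasDerivAt_tsum_mul_rpow_div {p q x : ℝ} (hp : 0 < p) (hq : 0 ≤ q) (hx : 0 < x) :
    HasDerivAt (fun y => ∑' n : ℕ, a n * y ^ (p + q * n) / (p + q * n))
      (∑' n : ℕ, a n * x ^ (p - 1 + q * n)) x := by
  have hpq : ∀ n : ℕ, 0 < p + q * n := fun n => by positivity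
  have hderiv : ∀ (n : ℕ), ∀ y ∈ Ioo (x / 2) (x + 1),
      HasDerivAt (fun y => a n * y ^ (p + q * n) / (p + q * n)) (a n * y ^ (p - 1 + q * n)) y := by
    intro n y hy
    have hy0 : 0 < y := (half_pos hx).trans hy.1
    refine (((hasDerivAt_rpow_const (Or.inl hy0.ne')).const_mul (a n)).div_const
      (p + q * n)).congr_deriv ?_
    rw [show p + q * n - 1 = p - 1 + q * n by ring]
    field_simp [(hpq n).ne']
  have hbound : ∀ (n : ℕ), ∀ y ∈ Ioo (x / 2) (x + 1), ‖a n * y ^ (p - 1 + q * n)‖ ≤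
      |a n| * (x / 2) ^ (p - 1 + q * n) + |a n| * (x + 1) ^ (p - 1 + q * n) := by
    intro n y hy
    have hy0 : 0 < y := (half_pos hx).trans hy.1
    rw [norm_mul, norm_eq_abs, norm_eq_abs, abs_of_pos (rpow_pos_of_pos hy0 _), ← mul_add]
    exact mul_le_mul_of_nonneg_left
      (rpow_le_rpow_add_rpow (half_pos hx) (Ioo_subset_Icc_self hy) _) (abs_nonneg _)
  have hsummable : Summable fun n : ℕ => a n * x ^ (p + q * n) / (p + q * n) := by
    refine .of_norm_bounded ((summable_abs_mul_rpow ha hx p q).div_const p) fun n => ?_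
    rw [norm_div, norm_mul, norm_eq_abs, norm_eq_abs, norm_eq_abs, abs_of_pos (hpq n),
      abs_of_pos (rpow_pos_of_pos hx _)]
    gcongr
    linarith [mul_nonneg hq (Nat.cast_nonneg (α := ℝ) n)]
  have hx_mem : x ∈ Ioo (x / 2) (x + 1) := ⟨by linarith, by linarith⟩
  exact hasDerivAt_tsum_of_isPreconnected
    ((summable_abs_mul_rpow ha (half_pos hx) _ _).add (summable_abs_mul_rpow ha (by linarith) _ _))
    isOpen_Ioo isPreconnected_Ioo hderiv hbound hx_mem hsummable hx_mem

end TermwiseDerivative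

lemma summable_sq_pow_div_factorial_mul_pow (l r : ℝ) :
    Summable fun n : ℕ => (l ^ 2) ^ n / ((2 * n + 1).factorial : ℝ) * r ^ n := by
  refine .of_norm_bounded (Real.summable_pow_div_factorial ‖l ^ 2 * r‖) fun n => ?_
  rw [div_mul_eq_mul_div, ← mul_pow, norm_div, norm_pow, RCLike.norm_natCast]
  gcongr
  omega

lemma hasSum_sq_pow_div_factorial_mul_rpow {l : ℝ} (hl : l ≠ 0) {x : ℝ} (hx : 0 < x) (s t : ℝ) :
    HasSum (fun n : ℕ => (l ^ 2) ^ n / ((2 * n + 1).factorial : ℝ) * x ^ (t - s + 2 * t * n))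
      (sinh (l * x ^ t) / (l * x ^ s)) := by
  refine ((hasSum_sinh (l * x ^ t)).div_const (l * x ^ s)).congr_fun fun n => ?_
  have hxs := (rpow_pos_of_pos hx s).ne'
  rw [rpow_add_mul_natCast hx, rpow_sub hx, mul_comm 2 t, rpow_mul hx.le, rpow_two]
  field_simp
  ring

lemma hypergeometric_term_eq {b c : ℝ} (hb : 0 < b) (hc : 0 < c) (l : ℝ) (n : ℕ) {y : ℝ}
    (hy : 0 < y) :
    y ^ (2 * b * c) / (2 * b * c) * (poch c n / (poch (c + 1) n * poch (3 / 2) n) *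
        (l ^ 2 * y ^ (2 * b) / 4) ^ n / n.factorial) =
      (l ^ 2) ^ n / ((2 * n + 1).factorial : ℝ) * y ^ (2 * b * c + 2 * b * n) /
        (2 * b * c + 2 * b * n) := by
  have h32 := poch_pos (by norm_num : (0 : ℝ) < 3 / 2) n
  rw [← div_div (poch c n), poch_div_poch_add_one hc, rpow_add_mul_natCast hy,
    div_pow, ← poch_three_halves_mul_factorial_mul_four_pow]
  field_simp
  ring

theorem stmt_8 (β α l : ℝ) (hβ : 1 ≤ β) (hα : α < β + 1) (hl : l ≠ 0)
    (c : ℝ) (hc : c = -α / (2 * β) + 1 / (2 * β) + 1 / 2) (x : ℝ) (hx : 0 < x) :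
    HasDerivAt (fun y : ℝ => y ^ (β - α + 1) / (β - α + 1) *
        ∑' n : ℕ, poch c n / (poch (c + 1) n * poch (3/2) n) *
          (l ^ 2 * y ^ (2 * β) / 4) ^ n / (n.factorial : ℝ))
      (Real.sinh (l * x ^ β) / (l * x ^ α)) x := by
  have hβ0 : 0 < β := by linarith
  have hp : β - α + 1 = 2 * β * c := by rw [hc]; field_simp; ring
  have hc0 : 0 < c := pos_of_mul_pos_right (hp ▸ (by linarith : 0 < β - α + 1)) (by positivity)
  have hderiv := hasDerivAt_tsum_mul_rpow_div (summable_sq_pow_div_factorial_mul_pow l)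
    (p := 2 * β * c) (q := 2 * β) (by positivity) (by positivity) hx
  rw [show 2 * β * c - 1 = β - α by linarith,
    (hasSum_sq_pow_div_factorial_mul_rpow hl hx α β).tsum_eq] at hderiv
  rw [hp]
  refine hderiv.congr_of_eventuallyEq ?_
  filter_upwards [lt_mem_nhds hx] with y hy
  rw [← tsum_mul_left]
  exact tsum_congr fun n => hypergeometric_term_eq hβ0 hc0 l n hy
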